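/- arXiv:math/0605480 — 8 statements merged into one kernel-verified Lean document; each statement's English description precedes it below -/
import Mathlib

section
/- For all f, g ∈ 𝒮, the function α ↦ ⟪f(α), g(α)⟫ is locally integrable on ℝ, and there exists α₀ > 0 such that ⟪f(α+1), g(α+1)⟫ = ⟪f(α), g(α)⟫ for almost every α ≥ α₀. Consequently, the limit ⟨f,g⟩ = lim_{m→∞, m ∈ ℕ} ∫_m^{m+1} ⟪f(α), g(α)⟫ dα exists. -/
open MeasureTheory Filter Topology

noncomputable section

variable {H₀ : Type*} [NormedAddCommGroup H₀] [InnerProductSpace ℂ H₀] [CompleteSpace H₀]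

/-- `f : ℝ → H₀` is locally square-integrable: strongly measurable and
`∫_K ‖f α‖² dα < ∞` for every compact `K ⊆ ℝ`. -/
def LocSqInt (f : ℝ → H₀) : Prop :=
  StronglyMeasurable f ∧
    ∀ K : Set ℝ, IsCompact K → IntegrableOn (fun α => ‖f α‖ ^ 2) K volume

/-- The stable sections `𝒮` (with respect to the family `V` of isometries playing the
role of right multiplication by the unit vector `e ∈ E₁`). -/
def StableSection (V : ℝ → H₀ →ₗᵢ[ℂ] H₀) (f : ℝ → H₀) : Prop :=
  LocSqInt f ∧ ∃ α₀ > (0 : ℝ), ∀ᵐ α ∂(volume : Measure ℝ), α₀ ≤ α → f (α + 1) = V α (f α)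

/-! By Cauchy–Schwarz, `|⟪f, g⟫| ≤ ‖f‖² + ‖g‖²` is locally integrable; since every `V α` is an
isometry, `⟪f (α + 1), g (α + 1)⟫ = ⟪V α (f α), V α (g α)⟫ = ⟪f α, g α⟫` for large `α`, so the
integrals over `(m, m + 1]` are eventually constant in `m`. -/

section PeriodicIntegral

variable {E : Type*} [NormedAddCommGroup E] [NormedSpace ℝ E] {h : ℝ → E} {α₀ : ℝ}

theorem setIntegral_Ioc_add_one_eq_of_ae_periodic
    (hper : ∀ᵐ α ∂(volume : Measure ℝ), α₀ ≤ α → h (α + 1) = h α) {t : ℝ} (ht : α₀ ≤ t) :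
    ∫ α in Set.Ioc (t + 1) (t + 1 + 1), h α = ∫ α in Set.Ioc t (t + 1), h α := by
  rw [← intervalIntegral.integral_of_le (by linarith),
    ← intervalIntegral.integral_of_le (by linarith), ← intervalIntegral.integral_comp_add_right,
    intervalIntegral.integral_of_le (by linarith), intervalIntegral.integral_of_le (by linarith)]
  refine setIntegral_congr_ae measurableSet_Ioc ?_
  filter_upwards [hper] with α hα hmem using hα (ht.trans hmem.1.le)

theorem exists_tendsto_setIntegral_Ioc_nat_of_ae_periodic
    (hper : ∀ᵐ α ∂(volume : Measure ℝ), α₀ ≤ α → h (α + 1) = h α) :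
    ∃ c : E, Tendsto (fun m : ℕ => ∫ α in Set.Ioc (m : ℝ) ((m : ℝ) + 1), h α) atTop (𝓝 c) := by
  set I : ℕ → E := fun m => ∫ α in Set.Ioc (m : ℝ) ((m : ℝ) + 1), h α
  have hstep : ∀ m ≥ ⌈α₀⌉₊, I (m + 1) = I m := fun m hm => by
    simpa only [I, Nat.cast_succ] using setIntegral_Ioc_add_one_eq_of_ae_periodic hper
      ((Nat.le_ceil α₀).trans (Nat.cast_le.mpr hm))
  refine ⟨I ⌈α₀⌉₊, tendsto_atTop_of_eventually_const (i₀ := ⌈α₀⌉₊) fun m hm => ?_⟩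
  induction m, hm using Nat.le_induction with
  | base => rfl
  | succ m hm ih => rw [hstep m hm, ih]

end PeriodicIntegral

section InnerSections

variable {E : Type*} [NormedAddCommGroup E] [InnerProductSpace ℂ E]

theorem LocSqInt.locallyIntegrable_inner {f g : ℝ → E} (hf : LocSqInt f) (hg : LocSqInt g) :
    LocallyIntegrable (fun α => (inner ℂ (f α) (g α) : ℂ)) volume := by
  rw [locallyIntegrable_iff]
  intro K hK
  refine ((hf.2 K hK).add (hg.2 K hK)).mono' (hf.1.inner hg.1).aestronglyMeasurable.restrict
    (Eventually.of_forall fun α => ?_)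
  calc ‖(inner ℂ (f α) (g α) : ℂ)‖ ≤ ‖f α‖ * ‖g α‖ := norm_inner_le_norm _ _
    _ ≤ ‖f α‖ ^ 2 + ‖g α‖ ^ 2 := by nlinarith [sq_nonneg (‖f α‖ - ‖g α‖)]

theorem StableSection.exists_ae_inner_add_one_eq {V : ℝ → E →ₗᵢ[ℂ] E} {f g : ℝ → E}
    (hf : StableSection V f) (hg : StableSection V g) :
    ∃ α₀ > (0 : ℝ), ∀ᵐ α ∂(volume : Measure ℝ), α₀ ≤ α →
      (inner ℂ (f (α + 1)) (g (α + 1)) : ℂ) = (inner ℂ (f α) (g α) : ℂ) := by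
  obtain ⟨-, a, ha, hfV⟩ := hf
  obtain ⟨-, b, -, hgV⟩ := hg
  refine ⟨max a b, lt_max_of_lt_left ha, ?_⟩
  filter_upwards [hfV, hgV] with α hfα hgα hα
  rw [hfα (le_of_max_le_left hα), hgα (le_of_max_le_right hα), LinearIsometry.inner_map_map]

end InnerSections

theorem innerSection_locallyIntegrable_periodic_and_limit_exists_general
    (V : ℝ → H₀ →ₗᵢ[ℂ] H₀)
    (f g : ℝ → H₀) (hf : StableSection V f) (hg : StableSection V g) :
    LocallyIntegrable (fun α => (inner ℂ (f α) (g α) : ℂ)) volume ∧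
    (∃ α₀ > (0 : ℝ), ∀ᵐ α ∂(volume : Measure ℝ), α₀ ≤ α →
        (inner ℂ (f (α + 1)) (g (α + 1)) : ℂ) = (inner ℂ (f α) (g α) : ℂ)) ∧
    ∃ c : ℂ,
      Tendsto (fun m : ℕ => ∫ α in Set.Ioc (m : ℝ) ((m : ℝ) + 1), (inner ℂ (f α) (g α) : ℂ))
        atTop (𝓝 c) := by
  obtain ⟨α₀, hα₀, hper⟩ := hf.exists_ae_inner_add_one_eq hg
  exact ⟨hf.1.locallyIntegrable_inner hg.1, ⟨α₀, hα₀, hper⟩,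
    exists_tendsto_setIntegral_Ioc_nat_of_ae_periodic hper⟩

/-- For `f, g ∈ 𝒮` the pointwise inner product is locally integrable and eventually
`1`-periodic a.e.; consequently `⟨f,g⟩ = lim_{m→∞} ∫_m^{m+1} ⟪f(α), g(α)⟫ dα` exists. -/
theorem innerSection_locallyIntegrable_periodic_and_limit_exists
    (V : ℝ → H₀ →ₗᵢ[ℂ] H₀)
    (hV : ∀ u : ℝ → H₀, StronglyMeasurable u → StronglyMeasurable fun α => V α (u α))
    (f g : ℝ → H₀) (hf : StableSection V f) (hg : StableSection V g) :
    LocallyIntegrable (fun α => (inner ℂ (f α) (g α) : ℂ)) volume ∧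
    (∃ α₀ > (0 : ℝ), ∀ᵐ α ∂(volume : Measure ℝ), α₀ ≤ α →
        (inner ℂ (f (α + 1)) (g (α + 1)) : ℂ) = (inner ℂ (f α) (g α) : ℂ)) ∧
    ∃ c : ℂ,
      Tendsto (fun m : ℕ => ∫ α in Set.Ioc (m : ℝ) ((m : ℝ) + 1), (inner ℂ (f α) (g α) : ℂ))
        atTop (𝓝 c) :=
  innerSection_locallyIntegrable_periodic_and_limit_exists_general V f g hf hg

end
end

section
/- 𝒮 is a complex linear subspace of the space of functions ℝ → H₀ (it contains 0 and is closed under pointwise addition and scalar multiplication), and the form ⟨·,·⟩ is a semi-inner product on 𝒮: for all f, g, h ∈ 𝒮 and c ∈ ℂ one has ⟨f, g + h⟩ = ⟨f,g⟩ + ⟨f,h⟩, ⟨f, c·g⟩ = c·⟨f,g⟩, ⟨g,f⟩ = conj(⟨f,g⟩), and ⟨f,f⟩ is a nonnegative real number. -/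
open MeasureTheory Filter Topology

noncomputable section

variable {H₀ : Type*} [NormedAddCommGroup H₀] [InnerProductSpace ℂ H₀] [CompleteSpace H₀]

/-- The null space `𝒩 ⊆ 𝒮` of sections vanishing a.e. eventually. -/
def NullSection (V : ℝ → H₀ →ₗᵢ[ℂ] H₀) (f : ℝ → H₀) : Prop :=
  StableSection V f ∧ ∃ α₀ > (0 : ℝ), ∀ᵐ α ∂(volume : Measure ℝ), α₀ ≤ α → f α = 0

/-- The semi-inner product `⟨f,g⟩ = lim_{m→∞, m ∈ ℕ} ∫_m^{m+1} ⟪f(α), g(α)⟫ dα` on `𝒮`. -/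
def sinn (f g : ℝ → H₀) : ℂ :=
  limUnder atTop
    (fun m : ℕ => ∫ α in Set.Ioc (m : ℝ) ((m : ℝ) + 1), (inner ℂ (f α) (g α) : ℂ))

/-!
The translation `α ↦ α + 1` carries the window `(m, m + 1]` onto `(m + 1, m + 2]`, and on a
stable section it acts through the isometry `V_α`, which preserves `⟪f α, g α⟫`. Hence for
stable `f, g` the window integrals `∫_m^{m+1} ⟪f, g⟫` are eventually constant in `m`, so
`⟨f, g⟩` is one of them; every algebraic property of `⟨·,·⟩` is then that of a single
window integral of the pointwise inner product.
-/

section LocSqInt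

variable {E : Type*} [NormedAddCommGroup E] {f g : ℝ → E}

lemma LocSqInt.zero : LocSqInt (0 : ℝ → E) :=
  ⟨stronglyMeasurable_const, fun _ _ => by simp⟩

lemma LocSqInt.add (hf : LocSqInt f) (hg : LocSqInt g) : LocSqInt (f + g) := by
  refine ⟨hf.1.add hg.1, fun K hK => ?_⟩
  refine Integrable.mono' (((hf.2 K hK).add (hg.2 K hK)).const_mul 2)
    ((hf.1.add hg.1).norm.pow 2).aestronglyMeasurable ?_
  filter_upwards with α
  calc ‖‖f α + g α‖ ^ 2‖ = ‖f α + g α‖ ^ 2 := by simp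
    _ ≤ (‖f α‖ + ‖g α‖) ^ 2 := by gcongr; exact norm_add_le _ _
    _ ≤ 2 * (‖f α‖ ^ 2 + ‖g α‖ ^ 2) := add_sq_le

lemma LocSqInt.const_smul {𝕜 : Type*} [NormedField 𝕜] [NormedSpace 𝕜 E] (c : 𝕜)
    (hf : LocSqInt f) : LocSqInt (c • f) := by
  refine ⟨hf.1.const_smul c, fun K hK => ((hf.2 K hK).const_mul (‖c‖ ^ 2)).congr ?_⟩
  filter_upwards with α
  simp [norm_smul, mul_pow]

lemma LocSqInt.integrableOn_inner {𝕜 : Type*} [RCLike 𝕜] [InnerProductSpace 𝕜 E]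
    (hf : LocSqInt f) (hg : LocSqInt g) {K : Set ℝ} (hK : IsCompact K) :
    IntegrableOn (fun α => inner 𝕜 (f α) (g α)) K := by
  refine Integrable.mono' ((hf.2 K hK).add (hg.2 K hK))
    (hf.1.inner hg.1).aestronglyMeasurable ?_
  filter_upwards with α
  calc ‖inner 𝕜 (f α) (g α)‖ ≤ ‖f α‖ * ‖g α‖ := norm_inner_le_norm _ _
    _ ≤ ‖f α‖ ^ 2 + ‖g α‖ ^ 2 := by nlinarith [two_mul_le_add_sq ‖f α‖ ‖g α‖]

end LocSqInt

section Periodic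

variable {G : Type*} [NormedAddCommGroup G] [NormedSpace ℝ G] {F : ℝ → G} {a : ℝ}

lemma setIntegral_Ioc_add_one_eq (hF : ∀ᵐ α, a ≤ α → F (α + 1) = F α) {b : ℝ} (hb : a ≤ b) :
    ∫ α in Set.Ioc (b + 1) (b + 1 + 1), F α = ∫ α in Set.Ioc b (b + 1), F α :=
  calc ∫ α in Set.Ioc (b + 1) (b + 1 + 1), F α = ∫ α in b + 1..b + 1 + 1, F α :=
        (intervalIntegral.integral_of_le (by linarith)).symm
    _ = ∫ α in b..b + 1, F (α + 1) := (intervalIntegral.integral_comp_add_right F 1).symm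
    _ = ∫ α in Set.Ioc b (b + 1), F (α + 1) := intervalIntegral.integral_of_le (by linarith)
    _ = ∫ α in Set.Ioc b (b + 1), F α := setIntegral_congr_ae measurableSet_Ioc <| by
        filter_upwards [hF] with α hα hαb using hα (hb.trans hαb.1.le)

lemma eventuallyConst_setIntegral_Ioc_nat (hF : ∀ᵐ α, a ≤ α → F (α + 1) = F α) :
    EventuallyConst (fun m : ℕ => ∫ α in Set.Ioc (m : ℝ) (m + 1), F α) atTop :=
  eventuallyConst_atTop_nat.2 ⟨⌈a⌉₊, fun m hm => by
    push_cast
    exact setIntegral_Ioc_add_one_eq hF (Nat.ceil_le.1 hm)⟩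

end Periodic

lemma Filter.EventuallyConst.eventually_limUnder_eq {X ι : Type*} [TopologicalSpace X]
    [T2Space X] [Nonempty X] {l : Filter ι} [l.NeBot] {u : ι → X} (h : EventuallyConst u l) :
    ∀ᶠ i in l, limUnder l u = u i := by
  obtain ⟨c, hc⟩ := h.eventuallyEq_const
  filter_upwards [hc] with i hi
  rw [(tendsto_const_nhds.congr' hc.symm).limUnder_eq, hi]

section StableSection

variable {E : Type*} [NormedAddCommGroup E] [InnerProductSpace ℂ E] {V : ℝ → E →ₗᵢ[ℂ] E}
  {f g h : ℝ → E}

/-- The `m`-th term of the sequence whose limit is `sinn f g`. -/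
def windowInner (f g : ℝ → E) (m : ℕ) : ℂ :=
  ∫ α in Set.Ioc (m : ℝ) (m + 1), inner ℂ (f α) (g α)

lemma windowInner_add_right (hf : LocSqInt f) (hg : LocSqInt g) (hh : LocSqInt h) (m : ℕ) :
    windowInner f (g + h) m = windowInner f g m + windowInner f h m := by
  have hK : IsCompact (Set.Icc (m : ℝ) (m + 1)) := isCompact_Icc
  simp only [windowInner, Pi.add_apply, inner_add_right]
  exact integral_add ((hf.integrableOn_inner hg hK).mono_set Set.Ioc_subset_Icc_self)
    ((hf.integrableOn_inner hh hK).mono_set Set.Ioc_subset_Icc_self)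

lemma windowInner_smul_right (c : ℂ) (m : ℕ) :
    windowInner f (c • g) m = c * windowInner f g m := by
  simp only [windowInner, Pi.smul_apply, inner_smul_right]
  exact integral_const_mul c _

lemma windowInner_symm (m : ℕ) : windowInner g f m = starRingEnd ℂ (windowInner f g m) := by
  simp only [windowInner, ← integral_conj, inner_conj_symm]

lemma windowInner_self (m : ℕ) :
    windowInner f f m = ((∫ α in Set.Ioc (m : ℝ) (m + 1), ‖f α‖ ^ 2 : ℝ) : ℂ) := by
  rw [windowInner, ← integral_complex_ofReal]
  simp only [inner_self_eq_norm_sq_to_K, Complex.ofReal_pow]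
  rfl

lemma StableSection.zero : StableSection V (0 : ℝ → E) :=
  ⟨LocSqInt.zero, 1, one_pos, by simp⟩

lemma StableSection.add (hf : StableSection V f) (hg : StableSection V g) :
    StableSection V (f + g) := by
  obtain ⟨hf, a, ha, hfV⟩ := hf
  obtain ⟨hg, b, -, hgV⟩ := hg
  refine ⟨hf.add hg, max a b, lt_max_of_lt_left ha, ?_⟩
  filter_upwards [hfV, hgV] with α hfα hgα hα
  simp [hfα (le_of_max_le_left hα), hgα (le_of_max_le_right hα)]

lemma StableSection.const_smul (c : ℂ) (hf : StableSection V f) : StableSection V (c • f) := by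
  obtain ⟨hf, a, ha, hfV⟩ := hf
  refine ⟨hf.const_smul c, a, ha, ?_⟩
  filter_upwards [hfV] with α hfα hα
  simp [hfα hα]

lemma StableSection.exists_ae_inner_add_one (hf : StableSection V f) (hg : StableSection V g) :
    ∃ a : ℝ, ∀ᵐ α, a ≤ α → inner ℂ (f (α + 1)) (g (α + 1)) = inner ℂ (f α) (g α) := by
  obtain ⟨-, a, -, hfV⟩ := hf
  obtain ⟨-, b, -, hgV⟩ := hg
  refine ⟨max a b, ?_⟩
  filter_upwards [hfV, hgV] with α hfα hgα hα
  rw [hfα (le_of_max_le_left hα), hgα (le_of_max_le_right hα), (V α).inner_map_map]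

lemma StableSection.eventually_sinn_eq_windowInner (hf : StableSection V f)
    (hg : StableSection V g) : ∀ᶠ m in atTop, sinn f g = windowInner f g m := by
  obtain ⟨a, ha⟩ := hf.exists_ae_inner_add_one hg
  exact (eventuallyConst_setIntegral_Ioc_nat (F := fun α => inner ℂ (f α) (g α)) ha
    ).eventually_limUnder_eq

lemma StableSection.sinn_add_right (hf : StableSection V f) (hg : StableSection V g)
    (hh : StableSection V h) : sinn f (g + h) = sinn f g + sinn f h := by
  obtain ⟨m, hfgh, hfg, hfh⟩ := ((hf.eventually_sinn_eq_windowInner (hg.add hh)).and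
    ((hf.eventually_sinn_eq_windowInner hg).and (hf.eventually_sinn_eq_windowInner hh))).exists
  rw [hfgh, hfg, hfh, windowInner_add_right hf.1 hg.1 hh.1]

lemma StableSection.sinn_smul_right (c : ℂ) (hf : StableSection V f) (hg : StableSection V g) :
    sinn f (c • g) = c * sinn f g := by
  obtain ⟨m, hfcg, hfg⟩ := ((hf.eventually_sinn_eq_windowInner (hg.const_smul c)).and
    (hf.eventually_sinn_eq_windowInner hg)).exists
  rw [hfcg, hfg, windowInner_smul_right]

lemma StableSection.sinn_symm (hf : StableSection V f) (hg : StableSection V g) :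
    sinn g f = starRingEnd ℂ (sinn f g) := by
  obtain ⟨m, hgf, hfg⟩ := ((hg.eventually_sinn_eq_windowInner hf).and
    (hf.eventually_sinn_eq_windowInner hg)).exists
  rw [hgf, hfg, windowInner_symm]

lemma StableSection.exists_sinn_self_eq_ofReal (hf : StableSection V f) :
    ∃ r : ℝ, 0 ≤ r ∧ sinn f f = r := by
  obtain ⟨m, hff⟩ := (hf.eventually_sinn_eq_windowInner hf).exists
  exact ⟨_, setIntegral_nonneg measurableSet_Ioc fun α _ => sq_nonneg ‖f α‖,
    hff.trans (windowInner_self m)⟩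

end StableSection

theorem stableSection_subspace_and_sinn_semiInner_general
    (V : ℝ → H₀ →ₗᵢ[ℂ] H₀) :
    StableSection V (0 : ℝ → H₀) ∧
    (∀ f g : ℝ → H₀, StableSection V f → StableSection V g → StableSection V (f + g)) ∧
    (∀ (c : ℂ) (f : ℝ → H₀), StableSection V f → StableSection V (c • f)) ∧
    (∀ f g h : ℝ → H₀, StableSection V f → StableSection V g → StableSection V h →
        sinn f (g + h) = sinn f g + sinn f h) ∧
    (∀ (c : ℂ) (f g : ℝ → H₀), StableSection V f → StableSection V g →
        sinn f (c • g) = c * sinn f g) ∧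
    (∀ f g : ℝ → H₀, StableSection V f → StableSection V g →
        sinn g f = starRingEnd ℂ (sinn f g)) ∧
    (∀ f : ℝ → H₀, StableSection V f → ∃ r : ℝ, 0 ≤ r ∧ sinn f f = (r : ℂ)) :=
  ⟨.zero, fun _ _ => .add, fun c _ => .const_smul c, fun _ _ _ hf => hf.sinn_add_right,
    fun c _ _ hf => hf.sinn_smul_right c, fun _ _ hf => hf.sinn_symm,
    fun _ hf => hf.exists_sinn_self_eq_ofReal⟩

/-- `𝒮` is a complex linear subspace of the functions `ℝ → H₀`, and `⟨·,·⟩` is a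
semi-inner product on it: additive and `ℂ`-homogeneous in the second variable,
conjugate-symmetric, and `⟨f,f⟩` is a nonnegative real number. -/
theorem stableSection_subspace_and_sinn_semiInner
    (V : ℝ → H₀ →ₗᵢ[ℂ] H₀)
    (hV : ∀ u : ℝ → H₀, StronglyMeasurable u → StronglyMeasurable fun α => V α (u α)) :
    StableSection V (0 : ℝ → H₀) ∧
    (∀ f g : ℝ → H₀, StableSection V f → StableSection V g → StableSection V (f + g)) ∧
    (∀ (c : ℂ) (f : ℝ → H₀), StableSection V f → StableSection V (c • f)) ∧
    (∀ f g h : ℝ → H₀, StableSection V f → StableSection V g → StableSection V h →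
        sinn f (g + h) = sinn f g + sinn f h) ∧
    (∀ (c : ℂ) (f g : ℝ → H₀), StableSection V f → StableSection V g →
        sinn f (c • g) = c * sinn f g) ∧
    (∀ f g : ℝ → H₀, StableSection V f → StableSection V g →
        sinn g f = starRingEnd ℂ (sinn f g)) ∧
    (∀ f : ℝ → H₀, StableSection V f → ∃ r : ℝ, 0 ≤ r ∧ sinn f f = (r : ℂ)) :=
  stableSection_subspace_and_sinn_semiInner_general V

end
end

section
/- Let f ∈ 𝒮 and let α₀ > 0 be such that f(α+1) = V_α(f(α)) for almost every α ≥ α₀. Then for every real T ≥ α₀ one has ⟨f,f⟩ = ∫_T^{T+1} ‖f(α)‖² dα; in particular ⟨f,f⟩ is a nonnegative real number. -/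
/-!
Since each `V α` is an isometry, the stability relation `f (α + 1) = V α (f α)` makes
`α ↦ ‖f α‖²` one-periodic beyond `α₀`. The integral of a locally integrable, eventually
periodic function over a window of one period does not depend on where the window sits,
so the sequence defining `⟨f, f⟩` is eventually constant, equal to `∫_T^{T+1} ‖f‖²`.
-/

open MeasureTheory Filter Topology

noncomputable section

variable {H₀ : Type*} [NormedAddCommGroup H₀] [InnerProductSpace ℂ H₀] [CompleteSpace H₀]

theorem MeasureTheory.LocallyIntegrable.intervalIntegrable {E : Type*} [NormedAddCommGroup E]
    {h : ℝ → E} (hh : LocallyIntegrable h) (a b : ℝ) : IntervalIntegrable h volume a b :=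
  (hh.integrableOn_isCompact isCompact_uIcc).intervalIntegrable

theorem intervalIntegral_add_period_eq_of_ae_periodic {E : Type*} [NormedAddCommGroup E]
    [NormedSpace ℝ E] {h : ℝ → E} (hh : LocallyIntegrable h) {p a : ℝ}
    (hper : ∀ᵐ α, a ≤ α → h (α + p) = h α) {S U : ℝ} (hS : a ≤ S) (hU : a ≤ U) :
    ∫ α in S..S + p, h α = ∫ α in U..U + p, h α := by
  have hshift : ∫ α in S + p..U + p, h α = ∫ α in S..U, h α := by
    rw [← intervalIntegral.integral_comp_add_right]
    refine intervalIntegral.integral_congr_ae ?_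
    filter_upwards [hper] with α hα hmem
    exact hα ((le_min hS hU).trans hmem.1.le)
  rw [← sub_eq_zero, intervalIntegral.integral_interval_sub_interval_comm
    (hh.intervalIntegrable _ _) (hh.intervalIntegrable _ _) (hh.intervalIntegrable _ _),
    hshift, sub_self]

theorem integral_inner_self_eq_ofReal_integral_norm_sq {H X : Type*} [NormedAddCommGroup H]
    [InnerProductSpace ℂ H] [MeasurableSpace X] {μ : Measure X} (f : X → H) :
    ∫ x, inner ℂ (f x) (f x) ∂μ = ((∫ x, ‖f x‖ ^ 2 ∂μ : ℝ) : ℂ) := by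
  rw [← integral_complex_ofReal]
  simp [inner_self_eq_norm_sq_to_K]

theorem sinn_self_eq_integral_normSq_general
    (V : ℝ → H₀ →ₗᵢ[ℂ] H₀)
    (f : ℝ → H₀) (hf : StableSection V f)
    (α₀ : ℝ)
    (hfs : ∀ᵐ α ∂(volume : Measure ℝ), α₀ ≤ α → f (α + 1) = V α (f α)) :
    ∀ T : ℝ, α₀ ≤ T →
      Tendsto (fun m : ℕ => ∫ α in Set.Ioc (m : ℝ) ((m : ℝ) + 1), (inner ℂ (f α) (f α) : ℂ))
        atTop (𝓝 ((∫ α in Set.Ioc T (T + 1), ‖f α‖ ^ 2 : ℝ) : ℂ)) ∧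
      0 ≤ ∫ α in Set.Ioc T (T + 1), ‖f α‖ ^ 2 := by
  intro T hT
  obtain ⟨⟨-, hloc⟩, -⟩ := hf
  have hper : ∀ᵐ α, α₀ ≤ α → ‖f (α + 1)‖ ^ 2 = ‖f α‖ ^ 2 := by
    filter_upwards [hfs] with α hα hle
    rw [hα hle, LinearIsometry.norm_map]
  refine ⟨tendsto_const_nhds.congr' ?_, setIntegral_nonneg measurableSet_Ioc fun _ _ => sq_nonneg _⟩
  filter_upwards [tendsto_natCast_atTop_atTop.eventually_ge_atTop α₀] with m hm
  rw [integral_inner_self_eq_ofReal_integral_norm_sq,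
    ← intervalIntegral.integral_of_le (by linarith), ← intervalIntegral.integral_of_le (by linarith),
    intervalIntegral_add_period_eq_of_ae_periodic (locallyIntegrable_iff.2 hloc) hper hT hm]

/-- If `f ∈ 𝒮` is stable beyond `α₀ > 0`, then for every `T ≥ α₀` one has
`⟨f,f⟩ = ∫_T^{T+1} ‖f(α)‖² dα`; in particular `⟨f,f⟩` is a nonnegative real number. -/
theorem sinn_self_eq_integral_normSq
    (V : ℝ → H₀ →ₗᵢ[ℂ] H₀)
    (hV : ∀ u : ℝ → H₀, StronglyMeasurable u → StronglyMeasurable fun α => V α (u α))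
    (f : ℝ → H₀) (hf : StableSection V f)
    (α₀ : ℝ) (hα₀ : 0 < α₀)
    (hfs : ∀ᵐ α ∂(volume : Measure ℝ), α₀ ≤ α → f (α + 1) = V α (f α)) :
    ∀ T : ℝ, α₀ ≤ T →
      Tendsto (fun m : ℕ => ∫ α in Set.Ioc (m : ℝ) ((m : ℝ) + 1), (inner ℂ (f α) (f α) : ℂ))
        atTop (𝓝 ((∫ α in Set.Ioc T (T + 1), ‖f α‖ ^ 2 : ℝ) : ℂ)) ∧
      0 ≤ ∫ α in Set.Ioc T (T + 1), ‖f α‖ ^ 2 :=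
  sinn_self_eq_integral_normSq_general V f hf α₀ hfs

end
end

section
/- (Characterization of the null space.) For every f ∈ 𝒮 one has ⟨f,f⟩ = 0 if and only if f ∈ 𝒩, i.e. if and only if there exists α₀ > 0 such that f(α) = 0 for almost every α ≥ α₀. -/
/-! Because every `V α` is an isometry, `‖f‖²` is a.e. `1`-periodic on a half-line, so the
integrals of `‖f‖²` over the windows `(m, m + 1]` are eventually constant. They therefore tend to
`0` only if they eventually vanish, and for the nonnegative integrand `‖f‖²` this means `f = 0`
a.e. on every late window, hence a.e. on a half-line. -/

open MeasureTheory Filter Topology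

noncomputable section

variable {H₀ : Type*} [NormedAddCommGroup H₀] [InnerProductSpace ℂ H₀] [CompleteSpace H₀]

section WindowIntegrals

open Set

variable {E : Type*} [NormedAddCommGroup E] [NormedSpace ℝ E] {g : ℝ → E} {a : ℝ}

theorem exists_natCast_mem_Ioc_of_natCast_lt {N : ℕ} {α : ℝ} (h : (N : ℝ) < α) :
    ∃ m : ℕ, N ≤ m ∧ α ∈ Ioc (m : ℝ) (m + 1) := by
  have hN : N < ⌈α⌉₊ := Nat.lt_ceil.2 h
  obtain ⟨m, hm⟩ : ∃ m, ⌈α⌉₊ = m + 1 := Nat.exists_eq_add_one_of_ne_zero (by omega)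
  refine ⟨m, by omega, Nat.lt_ceil.1 (by omega), ?_⟩
  exact_mod_cast hm ▸ Nat.le_ceil α

theorem ae_of_forall_natCast_Ioc {p : ℝ → Prop} {N : ℕ}
    (h : ∀ m : ℕ, N ≤ m → ∀ᵐ α, α ∈ Ioc (m : ℝ) (m + 1) → p α) :
    ∀ᵐ α, (N : ℝ) < α → p α := by
  have h' : ∀ᵐ α, ∀ m : ℕ, N ≤ m → α ∈ Ioc (m : ℝ) (m + 1) → p α :=
    ae_all_iff.2 fun m => by
      by_cases hm : N ≤ m
      · filter_upwards [h m hm] with α hα _ using hα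
      · exact Eventually.of_forall fun _ hm' => absurd hm' hm
  filter_upwards [h'] with α hα hNα
  obtain ⟨m, hNm, hmem⟩ := exists_natCast_mem_Ioc_of_natCast_lt hNα
  exact hα m hNm hmem

theorem integral_Ioc_add_one_eq_of_ae_periodic (hg : ∀ᵐ α, a ≤ α → g (α + 1) = g α) {t : ℝ}
    (ht : a ≤ t) : ∫ α in Ioc (t + 1) (t + 1 + 1), g α = ∫ α in Ioc t (t + 1), g α := by
  rw [← intervalIntegral.integral_of_le (by linarith), ← intervalIntegral.integral_of_le (by linarith),
    ← intervalIntegral.integral_comp_add_right, intervalIntegral.integral_of_le (by linarith),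
    intervalIntegral.integral_of_le (by linarith)]
  refine setIntegral_congr_ae measurableSet_Ioc ?_
  filter_upwards [hg] with α hα hmem using hα (ht.trans hmem.1.le)

theorem integral_Ioc_natCast_eq_of_ae_periodic (hg : ∀ᵐ α, a ≤ α → g (α + 1) = g α) {N m : ℕ}
    (ha : a ≤ N) (hm : N ≤ m) :
    ∫ α in Ioc (m : ℝ) (m + 1), g α = ∫ α in Ioc (N : ℝ) (N + 1), g α := by
  induction m, hm using Nat.le_induction with
  | base => rfl
  | succ n hn ih =>
    rw [← ih, Nat.cast_succ]
    exact integral_Ioc_add_one_eq_of_ae_periodic hg (ha.trans (by exact_mod_cast hn))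

theorem tendsto_integral_Ioc_natCast_of_ae_eq_zero {α₀ : ℝ} (hg : ∀ᵐ α, α₀ ≤ α → g α = 0) :
    Tendsto (fun m : ℕ => ∫ α in Ioc (m : ℝ) (m + 1), g α) atTop (𝓝 0) := by
  refine EventuallyEq.tendsto ?_
  filter_upwards [eventually_ge_atTop ⌈α₀⌉₊] with m hm
  refine integral_eq_zero_of_ae ?_
  filter_upwards [ae_restrict_mem measurableSet_Ioc, ae_restrict_of_ae hg] with α hα hgα
  exact hgα ((Nat.ceil_le.1 hm).trans hα.1.le)

theorem ae_eq_zero_of_tendsto_integral_Ioc_natCast {g : ℝ → ℝ} (hg_nonneg : 0 ≤ g)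
    (hg_int : LocallyIntegrable g) (hg : ∀ᵐ α, a ≤ α → g (α + 1) = g α)
    (h : Tendsto (fun m : ℕ => ∫ α in Ioc (m : ℝ) (m + 1), g α) atTop (𝓝 0)) :
    ∃ α₀ > (0 : ℝ), ∀ᵐ α, α₀ ≤ α → g α = 0 := by
  set N := ⌈a⌉₊
  have hconst : ∀ m : ℕ, N ≤ m →
      ∫ α in Ioc (m : ℝ) (m + 1), g α = ∫ α in Ioc (N : ℝ) (N + 1), g α :=
    fun m => integral_Ioc_natCast_eq_of_ae_periodic hg (Nat.le_ceil a)
  have hN : ∫ α in Ioc (N : ℝ) (N + 1), g α = 0 :=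
    tendsto_nhds_unique (EventuallyEq.tendsto (eventually_atTop.2 ⟨N, hconst⟩)) h
  have hwindow : ∀ m : ℕ, N ≤ m → ∀ᵐ α, α ∈ Ioc (m : ℝ) (m + 1) → g α = 0 := by
    intro m hm
    have hint : IntegrableOn g (Ioc (m : ℝ) (m + 1)) :=
      (hg_int.integrableOn_isCompact isCompact_Icc).mono_set Ioc_subset_Icc_self
    rw [← ae_restrict_iff' measurableSet_Ioc]
    exact (setIntegral_eq_zero_iff_of_nonneg_ae (Eventually.of_forall hg_nonneg) hint).1
      ((hconst m hm).trans hN)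
  refine ⟨N + 1, by positivity, ?_⟩
  filter_upwards [ae_of_forall_natCast_Ioc hwindow] with α hα hNα
  exact hα (by linarith)

end WindowIntegrals

theorem integral_inner_self_eq_ofReal {𝕜 E X : Type*} [RCLike 𝕜] [NormedAddCommGroup E]
    [InnerProductSpace 𝕜 E] [MeasurableSpace X] {μ : Measure X} (f : X → E) :
    ∫ x, (inner 𝕜 (f x) (f x) : 𝕜) ∂μ = ((∫ x, ‖f x‖ ^ 2 ∂μ : ℝ) : 𝕜) := by
  simp_rw [inner_self_eq_norm_sq_to_K, ← RCLike.ofReal_pow]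
  exact integral_ofReal

theorem sinn_self_eq_zero_iff_nullSection_general
    (V : ℝ → H₀ →ₗᵢ[ℂ] H₀)
    (f : ℝ → H₀) (hf : StableSection V f) :
    Tendsto (fun m : ℕ => ∫ α in Set.Ioc (m : ℝ) ((m : ℝ) + 1), (inner ℂ (f α) (f α) : ℂ))
        atTop (𝓝 0)
      ↔ ∃ α₀ > (0 : ℝ), ∀ᵐ α ∂(volume : Measure ℝ), α₀ ≤ α → f α = 0 := by
  obtain ⟨⟨-, hf_int⟩, α₀, -, hf_stable⟩ := hf
  have hnorm_periodic : ∀ᵐ α, α₀ ≤ α → ‖f (α + 1)‖ ^ 2 = ‖f α‖ ^ 2 := by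
    filter_upwards [hf_stable] with α hα hα₀
    rw [hα hα₀, (V α).norm_map]
  rw [funext fun m => integral_inner_self_eq_ofReal f, ← RCLike.ofReal_zero, tendsto_ofReal_iff']
  have hzero_iff : ∀ α, ‖f α‖ ^ 2 = 0 ↔ f α = 0 := fun α => sq_eq_zero_iff.trans norm_eq_zero
  simp_rw [← hzero_iff]
  constructor
  · exact ae_eq_zero_of_tendsto_integral_Ioc_natCast (fun α => sq_nonneg ‖f α‖)
      (locallyIntegrable_iff.2 hf_int) hnorm_periodic
  · rintro ⟨β, -, hβ⟩
    exact tendsto_integral_Ioc_natCast_of_ae_eq_zero hβ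

/-- Characterization of the null space: for `f ∈ 𝒮` one has `⟨f,f⟩ = 0` if and only if
`f ∈ 𝒩`, i.e. `f` vanishes a.e. beyond some `α₀ > 0`. -/
theorem sinn_self_eq_zero_iff_nullSection
    (V : ℝ → H₀ →ₗᵢ[ℂ] H₀)
    (hV : ∀ u : ℝ → H₀, StronglyMeasurable u → StronglyMeasurable fun α => V α (u α))
    (f : ℝ → H₀) (hf : StableSection V f) :
    Tendsto (fun m : ℕ => ∫ α in Set.Ioc (m : ℝ) ((m : ℝ) + 1), (inner ℂ (f α) (f α) : ℂ))
        atTop (𝓝 0)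
      ↔ ∃ α₀ > (0 : ℝ), ∀ᵐ α ∂(volume : Measure ℝ), α₀ ≤ α → f α = 0 :=
  sinn_self_eq_zero_iff_nullSection_general V f hf

end
end

section
/- (Totality of the images of the spaces K_m: the embedding R → H is onto a dense subspace.) For every f ∈ 𝒮 there exist m ∈ ℕ and g ∈ 𝒮 such that g(α) = 0 for almost every α ≤ m, g(α+1) = V_α(g(α)) for almost every α ≥ m, and ⟨f − g, f − g⟩ = 0 (i.e. f − g ∈ 𝒩). -/
open MeasureTheory Filter Topology

noncomputable section

variable {H₀ : Type*} [NormedAddCommGroup H₀] [InnerProductSpace ℂ H₀] [CompleteSpace H₀]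

/-!
Take `g = 1_{[m, ∞)} f` for an integer `m` beyond the stability threshold `α₀` of `f`.
Since the stability relation only links `α` to `α + 1`, cutting `f` off at `m` keeps it stable
from `m` on, and `f - g = 1_{(-∞, m)} f` vanishes on `[m, ∞)`, so it is null and all its
window integrals from `m` on are zero.
-/

theorem LocSqInt.mono {E : Type*} [NormedAddCommGroup E] {f g : ℝ → E} (hf : LocSqInt f)
    (hg : StronglyMeasurable g) (hgf : ∀ α, ‖g α‖ ≤ ‖f α‖) : LocSqInt g := by
  refine ⟨hg, fun K hK =>
    Integrable.mono (hf.2 K hK) (hg.norm.pow 2).aestronglyMeasurable.restrict ?_⟩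
  refine .of_forall fun α => ?_
  simp only [norm_pow, norm_norm]
  exact pow_le_pow_left₀ (norm_nonneg _) (hgf α) 2

theorem LocSqInt.indicator {E : Type*} [NormedAddCommGroup E] {f : ℝ → E} (hf : LocSqInt f)
    {s : Set ℝ} (hs : MeasurableSet s) : LocSqInt (s.indicator f) :=
  hf.mono (hf.1.indicator hs) fun α => norm_indicator_le_norm_self f α

theorem ae_indicator_Ici_add_one_eq {E : Type*} [Zero E] (T : ℝ → E → E) {f : ℝ → E}
    {a b : ℝ} (hf : ∀ᵐ α ∂(volume : Measure ℝ), a ≤ α → f (α + 1) = T α (f α)) (hab : a ≤ b) :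
    ∀ᵐ α ∂(volume : Measure ℝ), b ≤ α →
      (Set.Ici b).indicator f (α + 1) = T α ((Set.Ici b).indicator f α) := by
  filter_upwards [hf] with α hα hbα
  rw [Set.indicator_of_mem (show α + 1 ∈ Set.Ici b from by simp only [Set.mem_Ici]; linarith),
    Set.indicator_of_mem (show α ∈ Set.Ici b from hbα)]
  exact hα (hab.trans hbα)

theorem nullSection_indicator_Iio {E : Type*} [NormedAddCommGroup E] [InnerProductSpace ℂ E]
    (V : ℝ → E →ₗᵢ[ℂ] E) {f : ℝ → E} (hf : LocSqInt f) (b : ℝ) :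
    NullSection V ((Set.Iio b).indicator f) := by
  have hzero : ∀ α, max b 1 ≤ α → (Set.Iio b).indicator f α = 0 := fun α hα =>
    Set.indicator_of_notMem (show α ∉ Set.Iio b from not_lt.mpr ((le_max_left b 1).trans hα)) f
  have hpos : (0 : ℝ) < max b 1 := lt_max_of_lt_right one_pos
  refine ⟨⟨hf.indicator measurableSet_Iio, max b 1, hpos, .of_forall fun α hα => ?_⟩,
    max b 1, hpos, .of_forall hzero⟩
  rw [hzero α hα, hzero (α + 1) (by linarith), map_zero]

theorem tendsto_setIntegral_Ioc_nat_of_eventuallyEq_zero {E : Type*} [NormedAddCommGroup E]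
    [NormedSpace ℝ E] {φ : ℝ → E} (hφ : φ =ᶠ[atTop] 0) :
    Tendsto (fun k : ℕ => ∫ α in Set.Ioc (k : ℝ) ((k : ℝ) + 1), φ α) atTop (𝓝 0) := by
  obtain ⟨a, ha⟩ := eventually_atTop.mp hφ
  refine tendsto_const_nhds.congr' ?_
  filter_upwards [eventually_ge_atTop ⌈a⌉₊] with k hk
  refine (setIntegral_eq_zero_of_forall_eq_zero fun α hα => ha α ?_).symm
  exact (Nat.ceil_le.mp hk).trans hα.1.le

theorem stableSection_approx_by_window_supported_general
    (V : ℝ → H₀ →ₗᵢ[ℂ] H₀)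
    (f : ℝ → H₀) (hf : StableSection V f) :
    ∃ (m : ℕ) (g : ℝ → H₀), StableSection V g ∧
      (∀ᵐ α ∂(volume : Measure ℝ), α ≤ (m : ℝ) → g α = 0) ∧
      (∀ᵐ α ∂(volume : Measure ℝ), (m : ℝ) ≤ α → g (α + 1) = V α (g α)) ∧
      Tendsto (fun k : ℕ => ∫ α in Set.Ioc (k : ℝ) ((k : ℝ) + 1),
          (inner ℂ ((f - g) α) ((f - g) α) : ℂ)) atTop (𝓝 0) ∧
      NullSection V (f - g) := by
  obtain ⟨hf_loc, α₀, hα₀, hf_stab⟩ := hf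
  set m : ℕ := ⌈α₀⌉₊
  have hg_stab := ae_indicator_Ici_add_one_eq (fun α => V α) hf_stab (Nat.le_ceil α₀)
  have hdiff : f - (Set.Ici (m : ℝ)).indicator f = (Set.Iio (m : ℝ)).indicator f := by
    rw [← Set.indicator_compl, Set.compl_Ici]
  refine ⟨m, _, ⟨hf_loc.indicator measurableSet_Ici, m, hα₀.trans_le (Nat.le_ceil α₀), hg_stab⟩,
    ?_, hg_stab, ?_, hdiff ▸ nullSection_indicator_Iio V hf_loc m⟩
  · filter_upwards [Measure.ae_ne volume (m : ℝ)] with α hne hle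
    exact Set.indicator_of_notMem (not_le.mpr (lt_of_le_of_ne hle hne)) f
  · rw [hdiff]
    refine tendsto_setIntegral_Ioc_nat_of_eventuallyEq_zero ?_
    filter_upwards [eventually_ge_atTop (m : ℝ)] with α hα
    rw [Set.indicator_of_notMem (show α ∉ Set.Iio (m : ℝ) from not_lt.mpr hα)]
    simp

/-- Totality of the images of the spaces `K_m`: every `f ∈ 𝒮` agrees, modulo `𝒩`, with a
stable section `g` vanishing (a.e.) on `(-∞, m]` and stable (a.e.) beyond `m`. -/
theorem stableSection_approx_by_window_supported
    (V : ℝ → H₀ →ₗᵢ[ℂ] H₀)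
    (hV : ∀ u : ℝ → H₀, StronglyMeasurable u → StronglyMeasurable fun α => V α (u α))
    (f : ℝ → H₀) (hf : StableSection V f) :
    ∃ (m : ℕ) (g : ℝ → H₀), StableSection V g ∧
      (∀ᵐ α ∂(volume : Measure ℝ), α ≤ (m : ℝ) → g α = 0) ∧
      (∀ᵐ α ∂(volume : Measure ℝ), (m : ℝ) ≤ α → g (α + 1) = V α (g α)) ∧
      Tendsto (fun k : ℕ => ∫ α in Set.Ioc (k : ℝ) ((k : ℝ) + 1),
          (inner ℂ ((f - g) α) ((f - g) α) : ℂ)) atTop (𝓝 0) ∧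
      NullSection V (f - g) :=
  stableSection_approx_by_window_supported_general V f hf

end
end

section
/- (The representation operators are well defined on 𝒮.) Let t > 0 and let W : ℝ → (H₀ →ₗᵢ H₀) be a family of linear isometries of H₀ such that for every measurable u : ℝ → H₀ the function α ↦ W_α(u(α)) is measurable, and such that W_{β+1} ∘ V_β = V_{β+t} ∘ W_β for every β > 0. For f : ℝ → H₀ define (Φf)(α) := W_{α−t}(f(α−t)) if α > t and (Φf)(α) := 0 otherwise. Then for every f ∈ 𝒮 one has Φf ∈ 𝒮. -/
/-!
`Φ` is a translation by `t` followed by pointwise isometries, so it preserves local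
square-integrability by translation invariance of Lebesgue measure. If `f` is stable from `α₀` on,
the intertwining relation at `β = α - t` turns `f (β + 1) = V_β (f β)` into
`(Φf)(α + 1) = V_α ((Φf) α)`, so `Φf` is stable from `α₀ + t` on.
-/

open MeasureTheory Filter Topology

noncomputable section

variable {H₀ : Type*} [NormedAddCommGroup H₀] [InnerProductSpace ℂ H₀] [CompleteSpace H₀]

/-- The operator `Φ` of "left multiplication by a norm-one vector `x ∈ E_t`",
implemented via a family `W` of isometries: `(Φf)(α) = W_{α−t}(f(α−t))` for `α > t`
and `(Φf)(α) = 0` otherwise. -/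
def Phi (t : ℝ) (W : ℝ → H₀ →ₗᵢ[ℂ] H₀) (f : ℝ → H₀) : ℝ → H₀ :=
  fun α => if t < α then W (α - t) (f (α - t)) else 0

section Phi

variable {E : Type*} [NormedAddCommGroup E] [InnerProductSpace ℂ E]
  {t : ℝ} {W : ℝ → E →ₗᵢ[ℂ] E} {f : ℝ → E}

theorem phi_eq_indicator (t : ℝ) (W : ℝ → E →ₗᵢ[ℂ] E) (f : ℝ → E) :
    Phi t W f = (Set.Ioi t).indicator fun α => W (α - t) (f (α - t)) := by
  funext α
  simp only [Phi, Set.indicator_apply, Set.mem_Ioi]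

theorem phi_apply_of_lt {α : ℝ} (h : t < α) : Phi t W f α = W (α - t) (f (α - t)) :=
  if_pos h

theorem norm_phi_apply_le (α : ℝ) : ‖Phi t W f α‖ ≤ ‖f (α - t)‖ := by
  by_cases h : t < α
  · rw [phi_apply_of_lt h, LinearIsometry.norm_map]
  · simp [Phi, h]

theorem StronglyMeasurable.phi
    (hW : ∀ u : ℝ → E, StronglyMeasurable u → StronglyMeasurable fun α => W α (u α))
    (hf : StronglyMeasurable f) : StronglyMeasurable (Phi t W f) := by
  rw [phi_eq_indicator]
  exact ((hW f hf).comp_measurable (measurable_sub_const t)).indicator measurableSet_Ioi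

theorem phi_add_one {V : ℝ → E →ₗᵢ[ℂ] E} {α : ℝ}
    (hWV : ∀ β : ℝ, 0 < β → ∀ v : E, W (β + 1) (V β v) = V (β + t) (W β v))
    (hα : 0 < α - t) (hf : f (α - t + 1) = V (α - t) (f (α - t))) :
    Phi t W f (α + 1) = V α (Phi t W f α) := by
  calc Phi t W f (α + 1) = W (α - t + 1) (f (α - t + 1)) := by
        rw [phi_apply_of_lt (by linarith), sub_add_eq_add_sub]
    _ = V (α - t + t) (W (α - t) (f (α - t))) := by rw [hf, hWV _ hα]
    _ = V α (Phi t W f α) := by rw [sub_add_cancel, phi_apply_of_lt (by linarith)]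

end Phi

namespace LocSqInt

variable {E : Type*} [NormedAddCommGroup E] {f g : ℝ → E}

theorem comp_sub_right (hf : LocSqInt f) (t : ℝ) : LocSqInt fun α => f (α - t) := by
  refine ⟨hf.1.comp_measurable (measurable_sub_const t), fun K hK => ?_⟩
  have hshift : MeasurePreserving (fun α : ℝ => α - t) := measurePreserving_sub_right volume t
  exact (hshift.integrableOn_image (MeasurableEquiv.subRight t).measurableEmbedding).mp
    (hf.2 _ (hK.image (continuous_sub_right t)))

theorem of_norm_le (hf : LocSqInt f) (hg : StronglyMeasurable g) (hgf : ∀ α, ‖g α‖ ≤ ‖f α‖) :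
    LocSqInt g := by
  refine ⟨hg, fun K hK => (hf.2 K hK).mono' (hg.norm.pow 2).aestronglyMeasurable.restrict ?_⟩
  refine Eventually.of_forall fun α => ?_
  rw [Real.norm_of_nonneg (by positivity)]
  exact pow_le_pow_left₀ (norm_nonneg _) (hgf α) 2

theorem phi [InnerProductSpace ℂ E] {t : ℝ} {W : ℝ → E →ₗᵢ[ℂ] E}
    (hW : ∀ u : ℝ → E, StronglyMeasurable u → StronglyMeasurable fun α => W α (u α))
    (hf : LocSqInt f) : LocSqInt (Phi t W f) :=
  (hf.comp_sub_right t).of_norm_le (StronglyMeasurable.phi hW hf.1) norm_phi_apply_le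

end LocSqInt

theorem phi_maps_stable_to_stable_general
    (V : ℝ → H₀ →ₗᵢ[ℂ] H₀)
    (t : ℝ) (ht : 0 < t)
    (W : ℝ → H₀ →ₗᵢ[ℂ] H₀)
    (hW : ∀ u : ℝ → H₀, StronglyMeasurable u → StronglyMeasurable fun α => W α (u α))
    (hWV : ∀ β : ℝ, 0 < β → ∀ v : H₀, W (β + 1) (V β v) = V (β + t) (W β v)) :
    ∀ f : ℝ → H₀, StableSection V f → StableSection V (Phi t W f) := by
  rintro f ⟨hf, α₀, hα₀, hae⟩
  refine ⟨hf.phi hW, α₀ + t, by positivity, ?_⟩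
  have hae_shift : ∀ᵐ α ∂(volume : Measure ℝ),
      α₀ ≤ α - t → f (α - t + 1) = V (α - t) (f (α - t)) :=
    (measurePreserving_sub_right volume t).quasiMeasurePreserving.ae hae
  filter_upwards [hae_shift] with α hα hle
  have hα₀_le : α₀ ≤ α - t := by linarith
  exact phi_add_one hWV (hα₀.trans_le hα₀_le) (hα hα₀_le)

/-- The representation operators are well defined on `𝒮`: if `W` intertwines `V` as
`W_{β+1} ∘ V_β = V_{β+t} ∘ W_β` for `β > 0`, then `Φ` maps `𝒮` into `𝒮`. -/
theorem phi_maps_stable_to_stable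
    (V : ℝ → H₀ →ₗᵢ[ℂ] H₀)
    (hV : ∀ u : ℝ → H₀, StronglyMeasurable u → StronglyMeasurable fun α => V α (u α))
    (t : ℝ) (ht : 0 < t)
    (W : ℝ → H₀ →ₗᵢ[ℂ] H₀)
    (hW : ∀ u : ℝ → H₀, StronglyMeasurable u → StronglyMeasurable fun α => W α (u α))
    (hWV : ∀ β : ℝ, 0 < β → ∀ v : H₀, W (β + 1) (V β v) = V (β + t) (W β v)) :
    ∀ f : ℝ → H₀, StableSection V f → StableSection V (Phi t W f) :=
  phi_maps_stable_to_stable_general V t ht W hW hWV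
end
end

section
/- (The representation operators iterate associatively: semigroup property.) Let t, s > 0, let W, W' : ℝ → (H₀ →ₗᵢ H₀) be families of linear isometries of H₀ satisfying W_{β+1} ∘ V_β = V_{β+t} ∘ W_β and W'_{β+1} ∘ V_β = V_{β+s} ∘ W'_β for every β > 0. Define Φ_t^W by (Φ_t^W f)(α) := W_{α−t}(f(α−t)) if α > t and 0 otherwise, and similarly Φ_s^{W'}. Set W''_β := W_{β+s} ∘ W'_β for β ∈ ℝ. Then each W''_β is a linear isometry, the family W'' satisfies W''_{β+1} ∘ V_β = V_{β+t+s} ∘ W''_β for every β > 0, and for every f : ℝ → H₀ one has Φ_t^W (Φ_s^{W'} f) = Φ_{t+s}^{W''} f as functions ℝ → H₀. -/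
/-! For `α > t + s` both sides of the associativity equal `W_{α-t} (W'_{α-t-s} (f (α-t-s)))`;
otherwise both vanish, as `s ≥ 0` makes `α ≤ t` imply `α ≤ t + s`. The relation for `W''` follows by
pushing `V` first through `W'` (shift `s`) and then through `W` (shift `t`). -/

open MeasureTheory Filter Topology

noncomputable section

variable {H₀ : Type*} [NormedAddCommGroup H₀] [InnerProductSpace ℂ H₀] [CompleteSpace H₀]

section Intertwining

variable {𝕜 E : Type*} [Semiring 𝕜] [SeminormedAddCommGroup E] [Module 𝕜 E]

def IntertwinesShift (V : ℝ → E →ₗᵢ[𝕜] E) (t : ℝ) (W : ℝ → E →ₗᵢ[𝕜] E) : Prop :=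
  ∀ β : ℝ, 0 < β → ∀ v : E, W (β + 1) (V β v) = V (β + t) (W β v)

def shiftedComp (s : ℝ) (W W' : ℝ → E →ₗᵢ[𝕜] E) : ℝ → E →ₗᵢ[𝕜] E :=
  fun β => (W (β + s)).comp (W' β)

theorem IntertwinesShift.shiftedComp {V W W' : ℝ → E →ₗᵢ[𝕜] E} {t s : ℝ}
    (hW : IntertwinesShift V t W) (hW' : IntertwinesShift V s W') (hs : 0 ≤ s) :
    IntertwinesShift V (t + s) (shiftedComp s W W') := by
  intro β hβ v
  calc W (β + 1 + s) (W' (β + 1) (V β v))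
      = W (β + s + 1) (V (β + s) (W' β v)) := by rw [hW' β hβ, add_right_comm]
    _ = V (β + s + t) (W (β + s) (W' β v)) := hW (β + s) (by linarith) _
    _ = V (β + (t + s)) (W (β + s) (W' β v)) := by rw [add_assoc, add_comm s]

end Intertwining

theorem phi_phi_eq_phi_add_shiftedComp {E : Type*} [NormedAddCommGroup E]
    [InnerProductSpace ℂ E] {s : ℝ} (hs : 0 ≤ s) (t : ℝ) (W W' : ℝ → E →ₗᵢ[ℂ] E) (f : ℝ → E) :
    Phi t W (Phi s W' f) = Phi (t + s) (shiftedComp s W W') f := by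
  funext α
  by_cases hα : t + s < α
  · have hst : s < α - t := by linarith
    simp only [Phi, shiftedComp, if_pos hα, if_pos (by linarith : t < α), if_pos hst, sub_sub]
    rw [show α - (t + s) + s = α - t by ring]
    rfl
  · by_cases ht : t < α
    · have hst : ¬ s < α - t := by linarith
      simp only [Phi, if_neg hα, if_pos ht, if_neg hst, map_zero]
    · simp only [Phi, if_neg hα, if_neg ht]

theorem phi_comp_phi_eq_phi_add_general
    (V : ℝ → H₀ →ₗᵢ[ℂ] H₀)
    (t s : ℝ) (hs : 0 < s)
    (W W' : ℝ → H₀ →ₗᵢ[ℂ] H₀)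
    (hWV : ∀ β : ℝ, 0 < β → ∀ v : H₀, W (β + 1) (V β v) = V (β + t) (W β v))
    (hW'V : ∀ β : ℝ, 0 < β → ∀ v : H₀, W' (β + 1) (V β v) = V (β + s) (W' β v)) :
    (∀ (β : ℝ) (v : H₀), ‖((W (β + s)).comp (W' β)) v‖ = ‖v‖) ∧
    (∀ β : ℝ, 0 < β → ∀ v : H₀,
        ((W (β + 1 + s)).comp (W' (β + 1))) (V β v)
          = V (β + (t + s)) (((W (β + s)).comp (W' β)) v)) ∧
    (∀ f : ℝ → H₀,
        Phi t W (Phi s W' f) = Phi (t + s) (fun β => (W (β + s)).comp (W' β)) f) :=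
  ⟨fun β => ((W (β + s)).comp (W' β)).norm_map,
    IntertwinesShift.shiftedComp hWV hW'V hs.le,
    phi_phi_eq_phi_add_shiftedComp hs.le t W W'⟩

/-- The representation operators iterate associatively (semigroup property):
with `W''_β := W_{β+s} ∘ W'_β`, each `W''_β` is an isometry, `W''` satisfies the same
intertwining relation with parameter `t+s`, and `Φ_t^W ∘ Φ_s^{W'} = Φ_{t+s}^{W''}`. -/
theorem phi_comp_phi_eq_phi_add
    (V : ℝ → H₀ →ₗᵢ[ℂ] H₀)
    (t s : ℝ) (ht : 0 < t) (hs : 0 < s)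
    (W W' : ℝ → H₀ →ₗᵢ[ℂ] H₀)
    (hWV : ∀ β : ℝ, 0 < β → ∀ v : H₀, W (β + 1) (V β v) = V (β + t) (W β v))
    (hW'V : ∀ β : ℝ, 0 < β → ∀ v : H₀, W' (β + 1) (V β v) = V (β + s) (W' β v)) :
    (∀ (β : ℝ) (v : H₀), ‖((W (β + s)).comp (W' β)) v‖ = ‖v‖) ∧
    (∀ β : ℝ, 0 < β → ∀ v : H₀,
        ((W (β + 1 + s)).comp (W' (β + 1))) (V β v)
          = V (β + (t + s)) (((W (β + s)).comp (W' β)) v)) ∧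
    (∀ f : ℝ → H₀,
        Phi t W (Phi s W' f) = Phi (t + s) (fun β => (W (β + s)).comp (W' β)) f) :=
  phi_comp_phi_eq_phi_add_general V t s hs W W' hWV hW'V

end
end

section
/- (Compatibility of the embeddings K_m → H with the inductive system K_m → K_{m+n}.) Let m, n ∈ ℕ and let f₀ : ℝ → H₀ be strongly measurable with f₀(α) = 0 for almost every α ∉ (m, m+1] and ∫_m^{m+1} ‖f₀(α)‖² dα < ∞. Suppose f ∈ 𝒮 satisfies f(α) = 0 for α ≤ m, f(α) = f₀(α) for almost every α ∈ (m, m+1], and f(α+1) = V_α(f(α)) for almost every α ≥ m; and suppose g ∈ 𝒮 satisfies g(α) = 0 for α ≤ m+n, g(α) = f(α) for almost every α ∈ (m+n, m+n+1], and g(α+1) = V_α(g(α)) for almost every α ≥ m+n. Then ⟨f − g, f − g⟩ = 0, i.e. f − g ∈ 𝒩. -/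
open MeasureTheory Filter Topology

noncomputable section

variable {H₀ : Type*} [NormedAddCommGroup H₀] [InnerProductSpace ℂ H₀] [CompleteSpace H₀]

/-!
From time `m + n` on, `f` and `g` obey the same recursion `h (α + 1) = V α (h α)`, and
they agree a.e. on the window `(m + n, m + n + 1]`. Induction over the windows
`(m + n + k, m + n + k + 1]` shows that `f = g` a.e. on `(m + n, ∞)`, so `f - g` vanishes
a.e. eventually: it lies in `𝒩`, and the integrals defining `⟨f - g, f - g⟩` are eventually `0`.
-/

open Set

lemma ae_comp_add_right {p : ℝ → Prop} (c : ℝ) (h : ∀ᵐ α ∂(volume : Measure ℝ), p α) :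
    ∀ᵐ α ∂(volume : Measure ℝ), p (α + c) :=
  (measurePreserving_add_right volume c).quasiMeasurePreserving.tendsto_ae.eventually h

lemma exists_nat_mem_Ioc_add {c α : ℝ} (h : c < α) :
    ∃ k : ℕ, α ∈ Ioc (c + k) (c + k + 1) := by
  obtain ⟨n, hn⟩ := mem_iUnion.mp ((iUnion_Ioc_add_intCast c).symm ▸ mem_univ α)
  have hn0 : 0 ≤ n := by
    have : (-1 : ℝ) < n := by linarith [hn.2]
    have : (-1 : ℤ) < n := by exact_mod_cast this
    omega
  lift n to ℕ using hn0
  exact ⟨n, by simpa using hn⟩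

section Recursion

variable {E : Type*} {T : ℝ → E → E} {f g : ℝ → E} {c : ℝ}

theorem ae_eq_on_Ioi_of_recursion
    (hf : ∀ᵐ α ∂(volume : Measure ℝ), c ≤ α → f (α + 1) = T α (f α))
    (hg : ∀ᵐ α ∂(volume : Measure ℝ), c ≤ α → g (α + 1) = T α (g α))
    (hwin : ∀ᵐ α ∂(volume : Measure ℝ), α ∈ Ioc c (c + 1) → f α = g α) :
    ∀ᵐ α ∂(volume : Measure ℝ), c < α → f α = g α := by
  have hk : ∀ k : ℕ, ∀ᵐ α ∂(volume : Measure ℝ), α ∈ Ioc (c + k) (c + k + 1) → f α = g α := by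
    intro k
    induction k with
    | zero => simpa using hwin
    | succ k ih =>
      filter_upwards [ae_comp_add_right (-1) hf, ae_comp_add_right (-1) hg, ae_comp_add_right (-1) ih]
        with α hfα hgα ihα hα
      push_cast at hα
      have hα' : α + -1 ∈ Ioc (c + k) (c + k + 1) := ⟨by linarith [hα.1], by linarith [hα.2]⟩
      have hcα : c ≤ α + -1 := by linarith [hα'.1, k.cast_nonneg (α := ℝ)]
      calc f α = f (α + -1 + 1) := by ring_nf
        _ = T _ (f (α + -1)) := hfα hcα
        _ = T _ (g (α + -1)) := by rw [ihα hα']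
        _ = g (α + -1 + 1) := (hgα hcα).symm
        _ = g α := by ring_nf
  filter_upwards [ae_all_iff.mpr hk] with α hα hcα
  obtain ⟨k, hk⟩ := exists_nat_mem_Ioc_add hcα
  exact hα k hk

end Recursion

lemma LocSqInt.sub {E : Type*} [NormedAddCommGroup E] {f g : ℝ → E} (hf : LocSqInt f)
    (hg : LocSqInt g) : LocSqInt (f - g) := by
  refine ⟨hf.1.sub hg.1, fun K hK => ?_⟩
  have memLp {h : ℝ → E} (hh : LocSqInt h) : MemLp h 2 (volume.restrict K) :=
    (memLp_two_iff_integrable_sq_norm hh.1.aestronglyMeasurable).mpr (hh.2 K hK)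
  exact (memLp_two_iff_integrable_sq_norm (hf.1.sub hg.1).aestronglyMeasurable).mp
    ((memLp hf).sub (memLp hg))

lemma nullSection_of_ae_eq_zero {E : Type*} [NormedAddCommGroup E] [InnerProductSpace ℂ E]
    (V : ℝ → E →ₗᵢ[ℂ] E) {h : ℝ → E} (hh : LocSqInt h)
    {c : ℝ} (hc : 0 < c) (hzero : ∀ᵐ α ∂(volume : Measure ℝ), c ≤ α → h α = 0) :
    NullSection V h := by
  refine ⟨⟨hh, c, hc, ?_⟩, c, hc, hzero⟩
  filter_upwards [hzero, ae_comp_add_right 1 hzero] with α h0 h1 hα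
  rw [h0 hα, h1 (by linarith), map_zero]

lemma tendsto_integral_Ioc_nat_of_ae_eq_zero {F : Type*} [NormedAddCommGroup F]
    [NormedSpace ℝ F] {h : ℝ → F} {c : ℝ}
    (hzero : ∀ᵐ α ∂(volume : Measure ℝ), c ≤ α → h α = 0) :
    Tendsto (fun k : ℕ => ∫ α in Ioc (k : ℝ) (k + 1), h α) atTop (𝓝 0) := by
  refine tendsto_const_nhds.congr' ?_
  filter_upwards [eventually_ge_atTop ⌈c⌉₊] with k hk
  refine (integral_eq_zero_of_ae ?_).symm
  filter_upwards [ae_restrict_of_ae hzero, ae_restrict_mem measurableSet_Ioc] with α hα hmem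
  exact hα ((Nat.ceil_le.mp hk).trans hmem.1.le)

theorem window_embeddings_compatible_general
    (V : ℝ → H₀ →ₗᵢ[ℂ] H₀)
    (m n : ℕ)
    (f : ℝ → H₀) (hf : StableSection V f)
    (hfs : ∀ᵐ α ∂(volume : Measure ℝ), (m : ℝ) ≤ α → f (α + 1) = V α (f α))
    (g : ℝ → H₀) (hg : StableSection V g)
    (hgw : ∀ᵐ α ∂(volume : Measure ℝ),
        α ∈ Set.Ioc ((m : ℝ) + (n : ℝ)) ((m : ℝ) + (n : ℝ) + 1) → g α = f α)
    (hgs : ∀ᵐ α ∂(volume : Measure ℝ), (m : ℝ) + (n : ℝ) ≤ α → g (α + 1) = V α (g α)) :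
    Tendsto (fun k : ℕ => ∫ α in Set.Ioc (k : ℝ) ((k : ℝ) + 1),
        (inner ℂ ((f - g) α) ((f - g) α) : ℂ)) atTop (𝓝 0) ∧
    NullSection V (f - g) := by
  have hfs' : ∀ᵐ α ∂(volume : Measure ℝ), (m : ℝ) + n ≤ α → f (α + 1) = V α (f α) :=
    hfs.mono fun α hα hle => hα (by linarith [n.cast_nonneg (α := ℝ)])
  have hfg := ae_eq_on_Ioi_of_recursion hfs' hgs (hgw.mono fun α hα hmem => (hα hmem).symm)
  have hzero : ∀ᵐ α ∂(volume : Measure ℝ), (m : ℝ) + n + 1 ≤ α → (f - g) α = 0 := by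
    filter_upwards [hfg] with α hα hle
    rw [Pi.sub_apply, hα (by linarith), sub_self]
  have hinner : ∀ᵐ α ∂(volume : Measure ℝ), (m : ℝ) + n + 1 ≤ α →
      (inner ℂ ((f - g) α) ((f - g) α) : ℂ) = 0 := by
    filter_upwards [hzero] with α hα hle
    rw [hα hle, inner_zero_left]
  exact ⟨tendsto_integral_Ioc_nat_of_ae_eq_zero hinner,
    nullSection_of_ae_eq_zero V (hf.1.sub hg.1) (by positivity) hzero⟩

/-- Compatibility of the embeddings `K_m → H` with the inductive system `K_m → K_{m+n}`:
the stable extension of a window section `f₀` on `(m, m+1]` and the stable extension of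
its image in the window `(m+n, m+n+1]` agree modulo `𝒩`. -/
theorem window_embeddings_compatible
    (V : ℝ → H₀ →ₗᵢ[ℂ] H₀)
    (hV : ∀ u : ℝ → H₀, StronglyMeasurable u → StronglyMeasurable fun α => V α (u α))
    (m n : ℕ) (f₀ : ℝ → H₀) (hmeas : StronglyMeasurable f₀)
    (hsupp : ∀ᵐ α ∂(volume : Measure ℝ), α ∉ Set.Ioc (m : ℝ) ((m : ℝ) + 1) → f₀ α = 0)
    (hint : IntegrableOn (fun α => ‖f₀ α‖ ^ 2) (Set.Ioc (m : ℝ) ((m : ℝ) + 1)) volume)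
    (f : ℝ → H₀) (hf : StableSection V f)
    (hf0 : ∀ α : ℝ, α ≤ (m : ℝ) → f α = 0)
    (hfw : ∀ᵐ α ∂(volume : Measure ℝ), α ∈ Set.Ioc (m : ℝ) ((m : ℝ) + 1) → f α = f₀ α)
    (hfs : ∀ᵐ α ∂(volume : Measure ℝ), (m : ℝ) ≤ α → f (α + 1) = V α (f α))
    (g : ℝ → H₀) (hg : StableSection V g)
    (hg0 : ∀ α : ℝ, α ≤ (m : ℝ) + (n : ℝ) → g α = 0)
    (hgw : ∀ᵐ α ∂(volume : Measure ℝ),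
        α ∈ Set.Ioc ((m : ℝ) + (n : ℝ)) ((m : ℝ) + (n : ℝ) + 1) → g α = f α)
    (hgs : ∀ᵐ α ∂(volume : Measure ℝ), (m : ℝ) + (n : ℝ) ≤ α → g (α + 1) = V α (g α)) :
    Tendsto (fun k : ℕ => ∫ α in Set.Ioc (k : ℝ) ((k : ℝ) + 1),
        (inner ℂ ((f - g) α) ((f - g) α) : ℂ)) atTop (𝓝 0) ∧
    NullSection V (f - g) :=
  window_embeddings_compatible_general V m n f hf hfs g hg hgw hgs

end
end
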